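/- Let S = {±a_1,…,±a_n} where 0 < a_1 < … < a_n and gcd(a_1,…,a_n) = 1. Then χ(a_1,…,a_n) ≥ κ_S + 1 ≥ λ_S + 1 ≥ 3, where κ_S is the chromatic number and λ_S is the clique number of the core graph K_S. In particular there is no Borel proper κ_S-coloring of G_S. -/

import Mathlib

/-!
Let `κ = χ(K_S)`. In a proper coloring `C` of the orbit graph on `ℤ` with at most `κ` colors,
every translate `t + K_S` and `t - K_S` sees every color, so `C t` is the one color missing among
the `C (t + a)`, `a ∈ A`, and likewise among the `C (t - a)`. Hence `C` is determined by any
window of length `max A + 1` and has period `Q = (κ ^ (max A + 1))!`. A Borel `κ`-coloring `c`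
of `G_S` has a non-meagre color class, comeagre in some nonempty open set `U`; since the shift is
mixing, a generic `x ∈ U` has `x` and `(a + N Q) · x` in that class, so the orbit coloring
`t ↦ c (t · x)` gives the adjacent `0` and `a` the same color.

As `borelChromatic` is an `sInf`, which is `0` for the empty set, the bound also needs one finite
Borel coloring: the greedy coloring along a continuous proper `ℕ`-coloring (the smallest window
on which `x` differs from all its neighbours, with the pattern of `x` on it) is locally constant.
-/

def shift {α : Type*} (s : ℤ) (x : ℤ → α) : ℤ → α := fun n => x (n + s)

def FreePart : Set (ℤ → Bool) := {x | ∀ s : ℤ, s ≠ 0 → shift s x ≠ x}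

/-- `c` is a Borel proper coloring of the Schreier graph `G_S` on `F(2^ℤ)`,
where `S = {±a : a ∈ A}`: `c` is Borel and `c(x) ≠ c(s · x)` for all `x` and `s ∈ S`. -/
def IsBorelColoring (A : Finset ℕ) {k : ℕ}
    (c : {x : ℤ → Bool // x ∈ FreePart} → Fin k) : Prop :=
  Measurable c ∧
    ∀ (x : {x : ℤ → Bool // x ∈ FreePart}) (a : ℕ), a ∈ A →
      ∀ (h : shift (a : ℤ) x.1 ∈ FreePart), c x ≠ c ⟨shift (a : ℤ) x.1, h⟩

noncomputable def borelChromatic (A : Finset ℕ) : ℕ :=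
  sInf {k : ℕ | ∃ c : {x : ℤ → Bool // x ∈ FreePart} → Fin k, IsBorelColoring A c}

def coreGraph (A : Finset ℕ) : SimpleGraph {x : ℕ // x ∈ insert 0 A} where
  Adj u v := u ≠ v ∧ ((u.1 : ℤ) - (v.1 : ℤ)).natAbs ∈ A
  symm := by
    constructor
    rintro u v ⟨h1, h2⟩
    refine ⟨h1.symm, ?_⟩
    have h3 : ((v.1 : ℤ) - (u.1 : ℤ)).natAbs = ((u.1 : ℤ) - (v.1 : ℤ)).natAbs := by omega
    rwa [h3]
  loopless := by constructor; rintro u ⟨h1, _⟩; exact h1 rfl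

open Filter Topology Function SimpleGraph

section Shift

variable {α : Type*}

theorem shift_shift (s t : ℤ) (x : ℤ → α) : shift s (shift t x) = shift (s + t) x := by
  funext n
  simp only [shift, add_assoc]

@[simp]
theorem shift_zero (x : ℤ → α) : shift 0 x = x := by
  funext n
  simp [shift]

theorem continuous_shift [TopologicalSpace α] (s : ℤ) : Continuous (shift (α := α) s) :=
  continuous_pi fun _ => continuous_apply _

def shiftHomeomorph [TopologicalSpace α] (s : ℤ) : (ℤ → α) ≃ₜ (ℤ → α) where
  toFun := shift s
  invFun := shift (-s)
  left_inv x := by simp [shift_shift]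
  right_inv x := by simp [shift_shift]
  continuous_toFun := continuous_shift s
  continuous_invFun := continuous_shift (-s)

end Shift

theorem exists_finset_forall_eq_subset_of_mem_nhds {ι : Type*} {β : ι → Type*}
    [∀ i, TopologicalSpace (β i)] {x : ∀ i, β i} {U : Set (∀ i, β i)} (hU : U ∈ 𝓝 x) :
    ∃ I : Finset ι, ∀ y, (∀ i ∈ I, y i = x i) → y ∈ U := by
  rw [nhds_pi, Filter.mem_pi'] at hU
  obtain ⟨I, t, ht, hsub⟩ := hU
  exact ⟨I, fun y hy => hsub fun i hi => hy i hi ▸ mem_of_mem_nhds (ht i)⟩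

theorem shift_mem_freePart {x : ℤ → Bool} (hx : x ∈ FreePart) (s : ℤ) :
    shift s x ∈ FreePart := by
  intro t ht h
  apply hx t ht
  have := congrArg (shift (-s)) h
  rwa [shift_shift, shift_shift, shift_shift, neg_add_cancel, shift_zero,
    show -s + t + s = t by ring] at this

theorem freePart_eq_iInter : FreePart = ⋂ s : {s : ℤ // s ≠ 0}, {x | shift s x ≠ x} := by
  ext x
  simp [FreePart]

theorem isOpen_setOf_shift_ne (s : ℤ) : IsOpen {x : ℤ → Bool | shift s x ≠ x} :=
  (isClosed_eq (continuous_shift s) continuous_id).isOpen_compl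

theorem dense_setOf_shift_ne {s : ℤ} (hs : s ≠ 0) :
    Dense {x : ℤ → Bool | shift s x ≠ x} := by
  intro x
  rw [mem_closure_iff_nhds]
  intro U hU
  obtain ⟨I, hI⟩ := exists_finset_forall_eq_subset_of_mem_nhds hU
  obtain ⟨n, hn⟩ := Infinite.exists_notMem_finset I
  refine ⟨update x n (!x (n + s)),
    hI _ fun i hi => update_of_ne (ne_of_mem_of_not_mem hi hn) _ _, fun h => ?_⟩
  have := congrFun h n
  simp [shift, update_of_ne (show n + s ≠ n by omega)] at this

theorem freePart_mem_residual : FreePart ∈ residual (ℤ → Bool) := by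
  rw [freePart_eq_iInter]
  exact countable_iInter_mem.2 fun s =>
    residual_of_dense_open (isOpen_setOf_shift_ne s) (dense_setOf_shift_ne s.2)

theorem measurableSet_freePart : MeasurableSet FreePart := by
  rw [freePart_eq_iInter]
  exact .iInter fun s => (isOpen_setOf_shift_ne s).measurableSet

theorem exists_forall_le_nonempty_inter_shift_preimage {U : Set (ℤ → Bool)}
    (hU : IsOpen U) (hne : U.Nonempty) :
    ∃ N : ℕ, ∀ g : ℤ, N ≤ g → (U ∩ shift g ⁻¹' U).Nonempty := by
  obtain ⟨x, hx⟩ := hne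
  obtain ⟨I, hI⟩ := exists_finset_forall_eq_subset_of_mem_nhds (hU.mem_nhds hx)
  refine ⟨2 * I.sup Int.natAbs + 1, fun g hg => ?_⟩
  classical
  refine ⟨fun n => if n ∈ I then x n else x (n - g), hI _ fun i hi => if_pos hi,
    hI _ fun i hi => ?_⟩
  have hig : i + g ∉ I := fun h => by
    have := Finset.le_sup (f := Int.natAbs) hi
    have := Finset.le_sup (f := Int.natAbs) h
    omega
  simp [shift, hig]

namespace SimpleGraph

variable {M : Type*} (s : Set M)

def addCayleyAddLeftIso [AddGroup M] (d : M) : addCayley s ≃g addCayley s :=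
  ⟨Equiv.addLeft d, addCayley_adj_add_iff_right⟩

def addCayleyNegIso [AddCommGroup M] : addCayley s ≃g addCayley s :=
  ⟨Equiv.neg M, by
    intro u v
    simp only [Equiv.neg_apply, addCayley_adj, ne_eq, neg_inj, neg_neg]
    rw [add_comm u (-v), add_comm v (-u), or_comm]⟩

end SimpleGraph

/-- `addCayley` symmetrizes its generators, so this is `Cay(ℤ, S)` for `S = {±a : a ∈ A}`: the
graph on each orbit of `G_S`. -/
def intCayley (A : Finset ℕ) : SimpleGraph ℤ := addCayley (Nat.cast '' (A : Set ℕ))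

section IntCayley

variable {A : Finset ℕ}

theorem intCayley_adj {u v : ℤ} : (intCayley A).Adj u v ↔ u ≠ v ∧ (u - v).natAbs ∈ A := by
  simp only [intCayley, addCayley_adj', Set.mem_image, Finset.mem_coe]
  constructor
  · rintro ⟨hne, g, ⟨a, ha, rfl⟩, h⟩
    exact ⟨hne, by convert ha using 1; omega⟩
  · rintro ⟨hne, ha⟩
    refine ⟨hne, _, ⟨_, ha, rfl⟩, ?_⟩
    omega

theorem intCayley_adj_add {a : ℕ} (ha : a ∈ A) (hpos : 0 < a) (t : ℤ) :
    (intCayley A).Adj t (t + a) :=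
  intCayley_adj.2 ⟨by omega, by simpa using ha⟩

def coreGraph.toIntCayley : coreGraph A →g intCayley A where
  toFun u := u.1
  map_rel' {u v} h :=
    intCayley_adj.2 ⟨fun huv => h.1 (Subtype.ext (by exact_mod_cast huv)), h.2⟩

namespace SimpleGraph.Coloring

variable {α : Type*} [Fintype α] (hpos : ∀ a ∈ A, 0 < a)
  (hκ : (Fintype.card α : ℕ∞) ≤ (coreGraph A).chromaticNumber)
include hpos hκ

theorem eq_of_forall_add_eq {C D : (intCayley A).Coloring α} {t : ℤ}
    (h : ∀ a ∈ A, C (t + a) = D (t + a)) : C t = D t := by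
  obtain ⟨u, hu⟩ := card_le_chromaticNumber_iff_forall_surjective.1 hκ
    ((C.comp (addCayleyAddLeftIso _ t).toEmbedding.toHom).comp coreGraph.toIntCayley) (D t)
  change C (t + u.1) = D t at hu
  rcases Finset.mem_insert.1 u.2 with h0 | ha
  · simpa [h0] using hu
  · exact absurd (hu.symm.trans (h _ ha)) (D.valid (intCayley_adj_add ha (hpos _ ha) t))

theorem eq_of_forall_sub_eq {C D : (intCayley A).Coloring α} {t : ℤ}
    (h : ∀ a ∈ A, C (t - a) = D (t - a)) : C t = D t := by
  have := eq_of_forall_add_eq hpos hκ (C := C.comp (addCayleyNegIso _).toEmbedding.toHom)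
    (D := D.comp (addCayleyNegIso _).toEmbedding.toHom) (t := -t)
    fun a ha => by
      change C (-(-t + a)) = D (-(-t + a))
      rw [neg_add_rev, neg_neg, neg_add_eq_sub]
      exact h a ha
  change C (- -t) = D (- -t) at this
  rwa [neg_neg] at this

theorem eqOn_Ico_iff_succ {C D : (intCayley A).Coloring α} {t : ℤ} :
    Set.EqOn C D (Set.Ico t (t + A.sup id + 1)) ↔
      Set.EqOn C D (Set.Ico (t + 1) (t + 1 + A.sup id + 1)) := by
  have hle (a : ℕ) (ha : a ∈ A) : (a : ℤ) ≤ A.sup id := by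
    exact_mod_cast Finset.le_sup (f := id) ha
  constructor
  · intro h i ⟨hi₁, hi₂⟩
    rcases (Int.lt_add_one_iff.1 (by linarith : i < t + A.sup id + 1 + 1)).lt_or_eq with hi | rfl
    · exact h ⟨by linarith, hi⟩
    · exact eq_of_forall_sub_eq hpos hκ fun a ha =>
        h ⟨by linarith [hle a ha], by linarith [hpos a ha]⟩
  · intro h i ⟨hi₁, hi₂⟩
    rcases hi₁.eq_or_lt with rfl | hi
    · exact eq_of_forall_add_eq hpos hκ fun a ha =>
        h ⟨by linarith [hpos a ha], by linarith [hle a ha]⟩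
    · exact h ⟨hi, by linarith⟩

theorem eq_of_eqOn_Ico {C D : (intCayley A).Coloring α} {t : ℤ}
    (h : Set.EqOn C D (Set.Ico t (t + A.sup id + 1))) : ⇑C = ⇑D := by
  have key (s : ℤ) : Set.EqOn C D (Set.Ico s (s + A.sup id + 1)) := by
    induction s using Int.inductionOn' with
    | b => exact t
    | zero => exact h
    | succ k _ ih => exact (eqOn_Ico_iff_succ hpos hκ).1 ih
    | pred k _ ih => exact (eqOn_Ico_iff_succ hpos hκ).2 (by simpa using ih)
  funext s
  exact key s ⟨le_rfl, by omega⟩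

/-- Among `card α ^ (A.sup id + 1) + 1` windows of length `A.sup id + 1` two coincide, which gives
a period of at most that size. -/
theorem periodic_factorial (C : (intCayley A).Coloring α) :
    Periodic C ((Fintype.card α ^ (A.sup id + 1)).factorial : ℤ) := by
  obtain ⟨r, s, hrs, hw⟩ := Fintype.exists_ne_map_eq_of_card_lt
    (fun r : Fin (Fintype.card α ^ (A.sup id + 1) + 1) => fun i : Fin (A.sup id + 1) =>
      C ((r : ℤ) + i)) (by simp)
  set p : ℤ := (s : ℤ) - r
  have hp : p ≠ 0 := by omega
  have hper : Periodic C p := by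
    have := eq_of_eqOn_Ico hpos hκ (C := C)
      (D := C.comp (addCayleyAddLeftIso _ p).toEmbedding.toHom) (t := r)
      fun i ⟨hi₁, hi₂⟩ => by
        have := congrFun hw ⟨(i - r).toNat, by omega⟩
        change C i = C (p + i)
        convert this using 2 <;> simp [p] <;> omega
    intro t
    rw [add_comm]
    exact (congrFun this t).symm
  have hdvd : p ∣ ((Fintype.card α ^ (A.sup id + 1)).factorial : ℤ) := by
    rw [← Int.natAbs_dvd]
    exact Int.natCast_dvd_natCast.2 (Nat.dvd_factorial (by omega) (by omega))
  obtain ⟨k, hk⟩ := hdvd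
  rw [hk, mul_comm]
  exact hper.int_mul k

end SimpleGraph.Coloring

end IntCayley

section Greedy

variable {X ι : Type*} [Fintype ι] (φ : ι → X → X) (c : X → ℕ)

noncomputable def greedyColoring (x : X) : Fin (Fintype.card ι + 1) :=
  Classical.epsilon fun j => j ∉ (Finset.univ.filter fun i => c (φ i x) < c x).attach.image
    fun i => greedyColoring (φ i.1 x)
termination_by c x
decreasing_by exact (Finset.mem_filter.1 i.2).2

theorem greedyColoring_eq (x : X) : greedyColoring φ c x = Classical.epsilon fun j => j ∉
    (Finset.univ.filter fun i => c (φ i x) < c x).image fun i => greedyColoring φ c (φ i x) := by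
  classical
  rw [greedyColoring]
  congr! 3
  simp

theorem greedyColoring_ne_of_lt {i : ι} {x : X} (h : c (φ i x) < c x) :
    greedyColoring φ c (φ i x) ≠ greedyColoring φ c x := by
  classical
  set S :=
    (Finset.univ.filter fun i => c (φ i x) < c x).image fun i => greedyColoring φ c (φ i x)
  have hS : ∃ j, j ∉ S := by
    obtain ⟨j, -, hj⟩ := Finset.exists_mem_notMem_of_card_lt_card (s := S) (t := Finset.univ)
      ((Finset.card_image_le.trans (Finset.card_filter_le _ _)).trans_lt (by simp))
    exact ⟨j, hj⟩
  rw [greedyColoring_eq φ c x]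
  intro heq
  exact Classical.epsilon_spec hS
    (heq ▸ Finset.mem_image_of_mem _ (Finset.mem_filter.2 ⟨Finset.mem_univ i, h⟩))

theorem greedyColoring_ne (hsymm : ∀ i x, ∃ j, φ j (φ i x) = x)
    (hc : ∀ i x, c (φ i x) ≠ c x) (i : ι) (x : X) :
    greedyColoring φ c (φ i x) ≠ greedyColoring φ c x := by
  rcases (hc i x).lt_or_gt with h | h
  · exact greedyColoring_ne_of_lt φ c h
  · obtain ⟨j, hj⟩ := hsymm i x
    have := greedyColoring_ne_of_lt φ c (i := j) (x := φ i x) (by rwa [hj])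
    rw [hj] at this
    exact this.symm

theorem isLocallyConstant_greedyColoring [TopologicalSpace X] (hφ : ∀ i, Continuous (φ i))
    (hc : IsLocallyConstant c) : IsLocallyConstant (greedyColoring φ c) := by
  classical
  rw [IsLocallyConstant.iff_eventually_eq]
  suffices ∀ n x, c x = n → ∀ᶠ y in 𝓝 x, greedyColoring φ c y = greedyColoring φ c x by
    exact fun x => this _ x rfl
  intro n
  induction n using Nat.strong_induction_on with
  | _ n ih =>
  intro x hn
  have hnbr (i : ι) : ∀ᶠ y in 𝓝 x, c (φ i y) = c (φ i x) ∧
      (c (φ i x) < c x → greedyColoring φ c (φ i y) = greedyColoring φ c (φ i x)) := by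
    have hci := (hc.comp_continuous (hφ i)).eventually_eq x
    by_cases hi : c (φ i x) < c x
    · filter_upwards [hci, (hφ i).tendsto x |>.eventually (ih _ (hn ▸ hi) (φ i x) rfl)]
        with y h₁ h₂ using ⟨h₁, fun _ => h₂⟩
    · filter_upwards [hci] with y h₁ using ⟨h₁, fun h => absurd h hi⟩
  filter_upwards [hc.eventually_eq x, eventually_all.2 hnbr] with y hy hyi
  have hexcl :
      (Finset.univ.filter fun i => c (φ i y) < c y).image (fun i => greedyColoring φ c (φ i y)) =
        (Finset.univ.filter fun i => c (φ i x) < c x).image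
          fun i => greedyColoring φ c (φ i x) := by
    rw [Finset.filter_congr fun i _ => by rw [(hyi i).1, hy]]
    exact Finset.image_congr fun i hi => (hyi i).2 (Finset.mem_filter.1 hi).2
  rw [greedyColoring_eq, greedyColoring_eq, hexcl]

end Greedy

def freeShift (s : ℤ) (x : FreePart) : FreePart := ⟨shift s x, shift_mem_freePart x.2 s⟩

theorem freeShift_freeShift (s t : ℤ) (x : FreePart) :
    freeShift s (freeShift t x) = freeShift (s + t) x :=
  Subtype.ext (shift_shift s t x.1)

@[simp]
theorem freeShift_zero (x : FreePart) : freeShift 0 x = x :=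
  Subtype.ext (shift_zero x.1)

theorem continuous_freeShift (s : ℤ) : Continuous (freeShift s) :=
  ((continuous_shift s).comp continuous_subtype_val).subtype_mk _

theorem eventually_forall_natAbs_le_eq (x : FreePart) (N : ℕ) :
    ∀ᶠ y in 𝓝 x, ∀ i : ℤ, i.natAbs ≤ N → y.1 i = x.1 i := by
  have h (i : ℤ) : ∀ᶠ y in 𝓝 x, y.1 i = x.1 i :=
    ((IsLocallyConstant.iff_continuous _).2
      ((continuous_apply i).comp continuous_subtype_val)).eventually_eq x
  filter_upwards [(Filter.eventually_all_finset (Finset.Icc (-(N : ℤ)) N)).2 fun i _ => h i]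
    with y hy i hi using hy i (Finset.mem_Icc.2 ⟨by omega, by omega⟩)

section Orbit

variable {A : Finset ℕ} {α : Type*} {c : FreePart → α}

def orbitColoring (hc : ∀ (x : FreePart) (a : ℕ), a ∈ A →
      ∀ (h : shift (a : ℤ) x.1 ∈ FreePart), c x ≠ c ⟨shift (a : ℤ) x.1, h⟩)
    (x : FreePart) : (intCayley A).Coloring α :=
  Coloring.mk (fun t => c (freeShift t x)) fun {u v} huv => by
    obtain ⟨-, _, ⟨a, ha, rfl⟩, rfl | rfl⟩ := (addCayley_adj' _ u v).1 huv
    · rw [add_comm, ← freeShift_freeShift]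
      exact hc _ a ha _
    · rw [add_comm, ← freeShift_freeShift]
      exact (hc _ a ha _).symm

end Orbit

def symmGen (A : Finset ℕ) : Finset ℤ := A.image Nat.cast ∪ A.image fun a : ℕ => -(a : ℤ)

section WindowCode

variable {A : Finset ℕ}

theorem mem_symmGen {s : ℤ} : s ∈ symmGen A ↔ s.natAbs ∈ A := by
  simp only [symmGen, Finset.mem_union, Finset.mem_image]
  constructor
  · rintro (⟨a, ha, rfl⟩ | ⟨a, ha, rfl⟩) <;> simpa
  · intro h
    rcases Int.natAbs_eq s with hs | hs
    · exact Or.inl ⟨_, h, hs.symm⟩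
    · exact Or.inr ⟨_, h, hs.symm⟩

theorem natAbs_le_of_mem_symmGen {s : ℤ} (hs : s ∈ symmGen A) : s.natAbs ≤ A.sup id :=
  Finset.le_sup (f := id) (mem_symmGen.1 hs)

variable (A) in
def SeparatedWithin (M : ℕ) (x : ℤ → Bool) : Prop :=
  ∀ s ∈ symmGen A, ∃ i : ℤ, i.natAbs ≤ M ∧ x (i + s) ≠ x i

theorem exists_separatedWithin (hpos : ∀ a ∈ A, 0 < a) {x : ℤ → Bool}
    (hx : x ∈ FreePart) : ∃ M, SeparatedWithin A M x := by
  refine ((Filter.eventually_all_finset (l := atTop) _).2 fun s hs => ?_).exists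
  have hs0 : s ≠ 0 := fun h => by simpa [h] using hpos _ (mem_symmGen.1 hs)
  obtain ⟨i, hi⟩ := Function.ne_iff.1 (hx s hs0)
  exact (eventually_ge_atTop i.natAbs).mono fun M hM => ⟨i, hM, hi⟩

theorem separatedWithin_congr {M : ℕ} {x y : ℤ → Bool}
    (h : ∀ i : ℤ, i.natAbs ≤ M + A.sup id → x i = y i) :
    SeparatedWithin A M x ↔ SeparatedWithin A M y := by
  refine forall₂_congr fun s hs => exists_congr fun i => and_congr_right fun hi => ?_
  have := natAbs_le_of_mem_symmGen hs
  rw [h i (by omega), h (i + s) (by omega)]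

variable (A) in
noncomputable def separationRadius (x : ℤ → Bool) : ℕ := sInf {M | SeparatedWithin A M x}

theorem separationRadius_eq_of_forall_eq (hpos : ∀ a ∈ A, 0 < a) {x y : ℤ → Bool}
    (hx : x ∈ FreePart)
    (h : ∀ i : ℤ, i.natAbs ≤ separationRadius A x + A.sup id → y i = x i) :
    separationRadius A y = separationRadius A x := by
  have hsep : SeparatedWithin A (separationRadius A x) y :=
    (separatedWithin_congr fun i hi => (h i hi).symm).1
      (Nat.sInf_mem (exists_separatedWithin hpos hx))
  have hsep' : SeparatedWithin A (separationRadius A y) y :=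
    Nat.sInf_mem (s := {M | SeparatedWithin A M y}) ⟨_, hsep⟩
  refine le_antisymm (Nat.sInf_le hsep) (not_lt.1 fun hlt => Nat.notMem_of_lt_sInf hlt ?_)
  exact (separatedWithin_congr fun i hi => h i (by omega)).1 hsep'

variable (A) in
noncomputable def windowCode (x : FreePart) : ℕ :=
  Encodable.encode (separationRadius A x.1,
    (Finset.Icc (-(separationRadius A x.1 : ℤ)) (separationRadius A x.1)).filter fun i => x.1 i)

theorem windowCode_freeShift_ne (hpos : ∀ a ∈ A, 0 < a) {s : ℤ} (hs : s ∈ symmGen A)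
    (x : FreePart) : windowCode A (freeShift s x) ≠ windowCode A x := by
  intro h
  simp only [windowCode, Encodable.encode_inj, Prod.mk.injEq] at h
  obtain ⟨hr, hw⟩ := h
  have hsep : SeparatedWithin A (separationRadius A x.1) x.1 :=
    Nat.sInf_mem (s := {M | SeparatedWithin A M x.1}) (exists_separatedWithin hpos x.2)
  obtain ⟨i, hi, hne⟩ := hsep s hs
  have hi' : -(separationRadius A x.1 : ℤ) ≤ i ∧ i ≤ separationRadius A x.1 := by omega
  have := congrArg (i ∈ ·) hw
  simp only [hr, Finset.mem_filter, Finset.mem_Icc, hi', true_and, eq_iff_iff] at this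
  exact hne (Bool.eq_iff_iff.2 this)

theorem isLocallyConstant_windowCode (hpos : ∀ a ∈ A, 0 < a) :
    IsLocallyConstant (windowCode A) := by
  rw [IsLocallyConstant.iff_eventually_eq]
  intro x
  filter_upwards [eventually_forall_natAbs_le_eq x (separationRadius A x.1 + A.sup id)] with y hy
  have hr := separationRadius_eq_of_forall_eq hpos x.2 hy
  simp only [windowCode, hr]
  congr 2
  exact Finset.filter_congr fun i hi => by
    rw [hy i (by simp at hi; omega)]

end WindowCode

theorem exists_isBorelColoring {A : Finset ℕ} (hpos : ∀ a ∈ A, 0 < a) :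
    ∃ (k : ℕ) (c : FreePart → Fin k), IsBorelColoring A c := by
  let φ : symmGen A → FreePart → FreePart := fun s => freeShift s
  have hsymm (s : symmGen A) (x : FreePart) : ∃ t : symmGen A, φ t (φ s x) = x :=
    ⟨⟨-s.1, mem_symmGen.2 (by simpa using mem_symmGen.1 s.2)⟩,
      by simp [φ, freeShift_freeShift]⟩
  refine ⟨_, greedyColoring φ (windowCode A),
    (isLocallyConstant_greedyColoring φ _ (fun s => continuous_freeShift s)
      (isLocallyConstant_windowCode hpos)).continuous.measurable, fun x a ha _ => ?_⟩
  exact (greedyColoring_ne φ _ hsymm (fun s => windowCode_freeShift_ne hpos s.2)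
    ⟨a, mem_symmGen.2 (by simpa using ha)⟩ x).symm

section Baire

variable {X : Type*} [TopologicalSpace X]

theorem exists_not_isMeagre_image_preimage_singleton [BaireSpace X] [Nonempty X] {α : Type*}
    [Countable α] {T : Set X} (hT : T ∈ residual X) (c : T → α) :
    ∃ j, ¬ IsMeagre (((↑) : T → X) '' (c ⁻¹' {j})) := by
  by_contra! h
  refine not_isMeagre_of_mem_residual hT ((isMeagre_iUnion h).mono fun x hx => ?_)
  exact Set.mem_iUnion.2 ⟨c ⟨x, hx⟩, ⟨x, hx⟩, rfl, rfl⟩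

theorem MeasurableSet.exists_isOpen_isMeagre_diff [MeasurableSpace X] [BorelSpace X]
    {E : Set X} (hE : MeasurableSet E) (h : ¬ IsMeagre E) :
    ∃ U, IsOpen U ∧ U.Nonempty ∧ IsMeagre (U \ E) := by
  obtain ⟨U, hU, hEU⟩ := hE.residualEq_isOpen
  refine ⟨U, hU, Set.nonempty_iff_ne_empty.2 fun hU0 => h ?_, ?_⟩
  · subst hU0
    exact Filter.eventuallyEq_empty.1 hEU
  · exact Filter.eventuallyEq_empty.1 (by simpa using hEU.symm.diff (EventuallyEq.refl _ E))

theorem nonempty_inter_preimage_of_isMeagre_diff [BaireSpace X] (f : X ≃ₜ X) {U E : Set X}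
    (hU : IsOpen U) (hUE : IsMeagre (U \ E)) (hne : (U ∩ f ⁻¹' U).Nonempty) :
    (E ∩ f ⁻¹' E).Nonempty := by
  by_contra h
  refine not_isMeagre_of_isOpen (hU.inter (hU.preimage f.continuous)) hne <|
    (hUE.union (hUE.preimage_of_isOpenMap f.continuous f.isOpenMap)).mono ?_
  rintro x ⟨hxU, hfxU⟩
  by_cases hx : x ∈ E
  · exact Or.inr ⟨hfxU, fun hfx => h ⟨x, (⟨hx, hfx⟩ : x ∈ E ∩ f ⁻¹' E)⟩⟩
  · exact Or.inl ⟨hxU, hx⟩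

end Baire

theorem not_isBorelColoring {A : Finset ℕ} (hA : A.Nonempty) (hpos : ∀ a ∈ A, 0 < a) {k : ℕ}
    (hk : (k : ℕ∞) ≤ (coreGraph A).chromaticNumber) (c : FreePart → Fin k) :
    ¬ IsBorelColoring A c := by
  rintro ⟨hmeas, hproper⟩
  obtain ⟨a, ha⟩ := hA
  obtain ⟨j, hj⟩ := exists_not_isMeagre_image_preimage_singleton freePart_mem_residual c
  obtain ⟨U, hU, hUne, hUE⟩ := (measurableSet_freePart.subtype_image
    (hmeas (measurableSet_singleton j))).exists_isOpen_isMeagre_diff hj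
  obtain ⟨N, hN⟩ := exists_forall_le_nonempty_inter_shift_preimage hU hUne
  set Q : ℤ := ↑(k ^ (A.sup id + 1)).factorial
  have hQ : 1 ≤ Q := Nat.one_le_cast.2 (Nat.factorial_pos _)
  set g : ℤ := a + N * Q
  have hNg : (N : ℤ) ≤ g := by
    have : (N : ℤ) ≤ N * Q := le_mul_of_one_le_right (by positivity) hQ
    simp only [g]
    omega
  obtain ⟨_, ⟨x, hx, rfl⟩, y, hy, hxy⟩ :=
    nonempty_inter_preimage_of_isMeagre_diff (shiftHomeomorph g) hU hUE (hN g hNg)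
  let C := orbitColoring hproper x
  have hper : Periodic C Q := by
    have := Coloring.periodic_factorial hpos (by simpa using hk) C
    rwa [Fintype.card_fin] at this
  have hC0 : C 0 = j := by
    change c (freeShift 0 x) = j
    simpa using hx
  have hCg : C g = j := by
    rw [← hy]
    exact congrArg c (Subtype.ext hxy.symm)
  have hCa : C g = C a := hper.nat_mul N a
  have h := C.valid (intCayley_adj_add ha (hpos a ha) 0)
  rw [zero_add, hC0, ← hCa, hCg] at h
  exact h rfl

theorem two_le_cliqueNum_coreGraph {A : Finset ℕ} (hA : A.Nonempty) (hpos : ∀ a ∈ A, 0 < a) :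
    2 ≤ (coreGraph A).cliqueNum := by
  obtain ⟨a, ha⟩ := hA
  let u : {x // x ∈ insert 0 A} := ⟨0, Finset.mem_insert_self 0 A⟩
  let v : {x // x ∈ insert 0 A} := ⟨a, Finset.mem_insert_of_mem ha⟩
  have huv : u ≠ v := fun h => (hpos a ha).ne (congrArg Subtype.val h)
  have hclique : (coreGraph A).IsClique (({u, v} : Finset _) : Set _) := by
    rw [Finset.coe_pair, isClique_pair]
    exact fun _ => ⟨huv, by simpa [u, v] using ha⟩
  simpa [Finset.card_pair huv] using hclique.card_le_cliqueNum

theorem borelChromatic_lower_bound_general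
    (A : Finset ℕ) (hA : A.Nonempty) (hpos : ∀ a ∈ A, 0 < a) :
    (3 : ℕ∞) ≤ ((coreGraph A).cliqueNum : ℕ∞) + 1 ∧
    ((coreGraph A).cliqueNum : ℕ∞) + 1 ≤ (coreGraph A).chromaticNumber + 1 ∧
    (coreGraph A).chromaticNumber + 1 ≤ (borelChromatic A : ℕ∞) ∧
    ∀ k : ℕ, (k : ℕ∞) = (coreGraph A).chromaticNumber →
      ¬ ∃ c : {x : ℤ → Bool // x ∈ FreePart} → Fin k, IsBorelColoring A c := by
  obtain ⟨κ, hκ⟩ := ENat.ne_top_iff_exists.1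
    (chromaticNumber_ne_top_iff_exists.2 ⟨_, (coreGraph A).colorable_of_fintype⟩)
  refine ⟨?_, by gcongr; exact cliqueNum_le_chromaticNumber, ?_, ?_⟩
  · exact_mod_cast Nat.succ_le_succ (two_le_cliqueNum_coreGraph hA hpos)
  · rw [← hκ]
    have hbound : κ + 1 ≤ borelChromatic A := by
      refine le_csInf (exists_isBorelColoring hpos) fun k ⟨c, hc⟩ => ?_
      by_contra! hk
      exact not_isBorelColoring hA hpos (by rw [← hκ]; exact_mod_cast Nat.lt_succ_iff.1 hk) c hc
    exact_mod_cast hbound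
  · rintro k hk ⟨c, hc⟩
    exact not_isBorelColoring hA hpos hk.le c hc

/-- `χ(a₁,…,aₙ) ≥ κ_S + 1 ≥ λ_S + 1 ≥ 3`, where `κ_S` is the
chromatic number and `λ_S` the clique number of the core graph `K_S`. In particular
there is no Borel proper `κ_S`-coloring of `G_S`. -/
theorem borelChromatic_lower_bound
    (A : Finset ℕ) (hA : A.Nonempty) (hpos : ∀ a ∈ A, 0 < a) (hgcd : A.gcd id = 1) :
    (3 : ℕ∞) ≤ ((coreGraph A).cliqueNum : ℕ∞) + 1 ∧
    ((coreGraph A).cliqueNum : ℕ∞) + 1 ≤ (coreGraph A).chromaticNumber + 1 ∧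
    (coreGraph A).chromaticNumber + 1 ≤ (borelChromatic A : ℕ∞) ∧
    ∀ k : ℕ, (k : ℕ∞) = (coreGraph A).chromaticNumber →
      ¬ ∃ c : {x : ℤ → Bool // x ∈ FreePart} → Fin k, IsBorelColoring A c :=
  borelChromatic_lower_bound_general A hA hpos
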